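/- arXiv:2504.20671 — 2 statements merged into one kernel-verified Lean document; each statement's English description precedes it below -/
import Mathlib

section
/- Let ψ1, ψ2 ∈ ℂ with |ψ1| > |ψ2|, B ≠ 0, h = 2(|ψ1|² − |ψ2|²), and ψ1* = (4√(−B)/h)ψ2, ψ2* = (4√(−conj B)/h)ψ1 with conj(√(−conj B)) = −√(−B). Then the dual normal Gauss map g* := −ψ1*/conj(ψ2*) equals the original normal Gauss map g := ψ2/conj(ψ1). -/
open Complex

/-- The dual normal Gauss map `g* = −ψ1*/conj(ψ2*)` equals the original normal
Gauss map `g = ψ2/conj(ψ1)`. -/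
theorem dual_gauss_map (ψ1 ψ2 : ℂ) (habs : ‖ψ2‖ < ‖ψ1‖)
    (B : ℂ) (hB : B ≠ 0)
    (h : ℝ) (hh : h = 2 * (‖ψ1‖ ^ 2 - ‖ψ2‖ ^ 2))
    (s t : ℂ) (hs : s ^ 2 = -B) (ht : t ^ 2 = -(starRingEnd ℂ B))
    (hbranch : starRingEnd ℂ t = -s)
    (ψ1s ψ2s : ℂ)
    (h1 : ψ1s = (4 * s / (h : ℂ)) * ψ2)
    (h2 : ψ2s = (4 * t / (h : ℂ)) * ψ1) :
    -ψ1s / starRingEnd ℂ ψ2s = ψ2 / starRingEnd ℂ ψ1 := by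
  have hs0 : s ≠ 0 := by
    intro h0
    apply hB
    have := hs
    rw [h0] at this
    simpa using this.symm
  have hψ1 : ψ1 ≠ 0 := by
    intro h0
    rw [h0] at habs
    simp at habs
    exact absurd habs (not_lt.mpr (norm_nonneg ψ2))
  have hpos : (0:ℝ) < h := by
    rw [hh]
    have : ‖ψ2‖ ^ 2 < ‖ψ1‖ ^ 2 := by
      apply pow_lt_pow_left₀ habs (norm_nonneg _) ; norm_num
    linarith
  have hh0 : (h : ℂ) ≠ 0 := by exact_mod_cast hpos.ne'
  have hconj1 : starRingEnd ℂ ψ1 ≠ 0 := by simpa using hψ1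
  rw [h1, h2]
  rw [map_mul, map_div₀, map_mul]
  rw [hbranch]
  simp only [Complex.conj_ofReal, map_ofNat]
  field_simp
end

section
/- The surface f(x1,x2) = (x1, x2, x1·x2/2) ⊂ ℝ³, i.e. the hyperbolic paraboloid x3 = x1 x2/2, is a minimal surface with respect to the left-invariant metric ds² = dx1² + dx2² + (dx3 + (x2 dx1 − x1 dx2)/2)² of Nil₃: its mean curvature vanishes identically. -/
open Matrix

/-- The left-invariant metric of Nil₃, `ds² = dx1² + dx2² + (dx3 + (x2 dx1 − x1 dx2)/2)²`,
as a matrix-valued function on ℝ³ (coordinates `p 0 = x1`, `p 1 = x2`, `p 2 = x3`). -/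
noncomputable def gNil (p : Fin 3 → ℝ) : Matrix (Fin 3) (Fin 3) ℝ :=
  !![1 + (p 1) ^ 2 / 4, -(p 0 * p 1) / 4, p 1 / 2;
     -(p 0 * p 1) / 4, 1 + (p 0) ^ 2 / 4, -(p 0) / 2;
     p 1 / 2, -(p 0) / 2, 1]

/-- Partial derivative in direction `i` of a function on ℝ³. -/
noncomputable def pd (i : Fin 3) (F : (Fin 3 → ℝ) → ℝ) (p : Fin 3 → ℝ) : ℝ :=
  fderiv ℝ F p (Pi.single i 1)

/-- Christoffel symbols of the Nil₃ metric. -/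
noncomputable def Γ (k i j : Fin 3) (p : Fin 3 → ℝ) : ℝ :=
  (1 / 2) * ∑ l : Fin 3, (gNil p)⁻¹ k l *
    (pd i (fun q => gNil q l j) p + pd j (fun q => gNil q l i) p -
      pd l (fun q => gNil q i j) p)

/-- The Nil₃ inner product of two tangent vectors at `p`. -/
noncomputable def ip (p X Y : Fin 3 → ℝ) : ℝ :=
  ∑ i : Fin 3, ∑ j : Fin 3, gNil p i j * X i * Y j

/-- The hyperbolic paraboloid `x3 = x1 x2/2` as a parameterized surface. -/
noncomputable def f (u : Fin 2 → ℝ) : Fin 3 → ℝ := ![u 0, u 1, u 0 * u 1 / 2]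

/-- Tangent vector of `f` in coordinate direction `a`. -/
noncomputable def fT (a : Fin 2) (u : Fin 2 → ℝ) : Fin 3 → ℝ :=
  fun k => fderiv ℝ (fun v => f v k) u (Pi.single a 1)

/-- Second coordinate derivatives of `f`. -/
noncomputable def fTT (a b : Fin 2) (u : Fin 2 → ℝ) : Fin 3 → ℝ :=
  fun k => fderiv ℝ (fun v => fT b v k) u (Pi.single a 1)

/-- First fundamental form of `f` w.r.t. the Nil₃ metric. -/
noncomputable def I₁ (a b : Fin 2) (u : Fin 2 → ℝ) : ℝ :=
  ip (f u) (fT a u) (fT b u)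

/-- Second fundamental form of `f` w.r.t. the Nil₃ metric and a unit normal `N`. -/
noncomputable def II (a b : Fin 2) (u : Fin 2 → ℝ) (N : Fin 3 → ℝ) : ℝ :=
  ip (f u) N (fun k => fTT a b u k +
    ∑ i : Fin 3, ∑ j : Fin 3, Γ k i j (f u) * fT a u i * fT b u j)

/-- Mean curvature of `f` w.r.t. the Nil₃ metric and the unit normal `N`. -/
noncomputable def meanCurv (u : Fin 2 → ℝ) (N : Fin 3 → ℝ) : ℝ :=
  (I₁ 1 1 u * II 0 0 u N - 2 * I₁ 0 1 u * II 0 1 u N + I₁ 0 0 u * II 1 1 u N) /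
    (2 * (I₁ 0 0 u * I₁ 1 1 u - I₁ 0 1 u ^ 2))

lemma gNil_inv (p : Fin 3 → ℝ) : (gNil p)⁻¹ =
    !![1, 0, -(p 1)/2; 0, 1, p 0/2; -(p 1)/2, p 0/2, 1 + (p 0^2 + p 1^2)/4] := by
  apply Matrix.inv_eq_right_inv
  ext i j
  fin_cases i <;> fin_cases j <;>
    simp [gNil, Matrix.mul_apply, Fin.sum_univ_three] <;> ring

lemma pd_g (i l j : Fin 3) (p : Fin 3 → ℝ) : pd i (fun q => gNil q l j) p =
    (Pi.single i 1 : Fin 3 → ℝ) 0 *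
      !![0, -(p 1)/4, 0; -(p 1)/4, p 0/2, -(1:ℝ)/2; 0, -(1:ℝ)/2, 0] l j
    + (Pi.single i 1 : Fin 3 → ℝ) 1 *
      !![p 1/2, -(p 0)/4, (1:ℝ)/2; -(p 0)/4, 0, 0; (1:ℝ)/2, 0, 0] l j := by
  have h0 := hasFDerivAt_apply (𝕜 := ℝ) (0 : Fin 3) p
  have h1 := hasFDerivAt_apply (𝕜 := ℝ) (1 : Fin 3) p
  fin_cases l <;> fin_cases j
  · show pd i (fun q => 1 + q 1 ^ 2 / 4) p = _
    simp only [pd, pow_two, div_eq_mul_inv]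
    erw [(((h1.mul h1).mul_const (4:ℝ)⁻¹).const_add (1:ℝ)).fderiv]; simp; ring
  · show pd i (fun q => -(q 0 * q 1) / 4) p = _
    simp only [pd, div_eq_mul_inv]
    erw [(((h0.mul h1).neg).mul_const (4:ℝ)⁻¹).fderiv]; simp; ring
  · show pd i (fun q => q 1 / 2) p = _
    simp only [pd, div_eq_mul_inv]
    erw [(h1.mul_const (2:ℝ)⁻¹).fderiv]; simp; ring
  · show pd i (fun q => -(q 0 * q 1) / 4) p = _
    simp only [pd, div_eq_mul_inv]
    erw [(((h0.mul h1).neg).mul_const (4:ℝ)⁻¹).fderiv]; simp; ring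
  · show pd i (fun q => 1 + q 0 ^ 2 / 4) p = _
    simp only [pd, pow_two, div_eq_mul_inv]
    erw [(((h0.mul h0).mul_const (4:ℝ)⁻¹).const_add (1:ℝ)).fderiv]; simp; ring
  · show pd i (fun q => -(q 0) / 2) p = _
    simp only [pd, div_eq_mul_inv]
    erw [((h0.neg).mul_const (2:ℝ)⁻¹).fderiv]; simp; ring
  · show pd i (fun q => q 1 / 2) p = _
    simp only [pd, div_eq_mul_inv]
    erw [(h1.mul_const (2:ℝ)⁻¹).fderiv]; simp; ring
  · show pd i (fun q => -(q 0) / 2) p = _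
    simp only [pd, div_eq_mul_inv]
    erw [((h0.neg).mul_const (2:ℝ)⁻¹).fderiv]
    simp [Matrix.vecHead, Matrix.vecTail]; ring
  · show pd i (fun _ => (1:ℝ)) p = _
    simp only [pd]
    rw [fderiv_fun_const]; simp [Matrix.vecHead, Matrix.vecTail]

lemma Γ_val (k i j : Fin 3) (p : Fin 3 → ℝ) : Γ k i j p =
    ![![![0, p 1/4, 0], ![p 1/4, -(p 0)/2, 1/2], ![0, 1/2, 0]],
      ![![-(p 1)/2, p 0/4, -(1:ℝ)/2], ![p 0/4, 0, 0], ![-(1:ℝ)/2, 0, 0]],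
      ![![-(p 0*p 1)/4, (p 0^2 - p 1^2)/8, -(p 0)/4],
        ![(p 0^2 - p 1^2)/8, p 0*p 1/4, -(p 1)/4], ![-(p 0)/4, -(p 1)/4, 0]]] k i j := by
  fin_cases k <;> fin_cases i <;> fin_cases j <;>
    simp [Γ, pd_g, gNil_inv, Fin.sum_univ_three, Pi.single_apply, Matrix.vecHead, Matrix.vecTail] <;> ring

lemma fT0 (u : Fin 2 → ℝ) : fT 0 u = ![1, 0, u 1 / 2] := by
  have h0 := hasFDerivAt_apply (𝕜 := ℝ) (0 : Fin 2) u
  have h1 := hasFDerivAt_apply (𝕜 := ℝ) (1 : Fin 2) u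
  funext k
  fin_cases k
  · show fderiv ℝ (fun v : Fin 2 → ℝ => v 0) u (Pi.single 0 1) = _
    erw [h0.fderiv]; simp
  · show fderiv ℝ (fun v : Fin 2 → ℝ => v 1) u (Pi.single 0 1) = _
    erw [h1.fderiv]; simp
  · show fderiv ℝ (fun v : Fin 2 → ℝ => v 0 * v 1 / 2) u (Pi.single 0 1) = _
    simp only [div_eq_mul_inv]
    erw [((h0.mul h1).mul_const (2:ℝ)⁻¹).fderiv]; simp [mul_comm]

lemma fT1 (u : Fin 2 → ℝ) : fT 1 u = ![0, 1, u 0 / 2] := by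
  have h0 := hasFDerivAt_apply (𝕜 := ℝ) (0 : Fin 2) u
  have h1 := hasFDerivAt_apply (𝕜 := ℝ) (1 : Fin 2) u
  funext k
  fin_cases k
  · show fderiv ℝ (fun v : Fin 2 → ℝ => v 0) u (Pi.single 1 1) = _
    erw [h0.fderiv]; simp
  · show fderiv ℝ (fun v : Fin 2 → ℝ => v 1) u (Pi.single 1 1) = _
    erw [h1.fderiv]; simp
  · show fderiv ℝ (fun v : Fin 2 → ℝ => v 0 * v 1 / 2) u (Pi.single 1 1) = _
    simp only [div_eq_mul_inv]
    erw [((h0.mul h1).mul_const (2:ℝ)⁻¹).fderiv]; simp [mul_comm]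

lemma fTT00 (u : Fin 2 → ℝ) : fTT 0 0 u = fun _ => 0 := by
  have h1 := hasFDerivAt_apply (𝕜 := ℝ) (1 : Fin 2) u
  funext k
  fin_cases k
  · show fderiv ℝ (fun v => fT 0 v 0) u (Pi.single 0 1) = 0
    rw [show (fun v : Fin 2 → ℝ => fT 0 v 0) = fun _ => (1:ℝ) from
      funext fun v => by rw [fT0 v]; simp, fderiv_fun_const]; simp
  · show fderiv ℝ (fun v => fT 0 v 1) u (Pi.single 0 1) = 0
    rw [show (fun v : Fin 2 → ℝ => fT 0 v 1) = fun _ => (0:ℝ) from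
      funext fun v => by rw [fT0 v]; simp, fderiv_fun_const]; simp
  · show fderiv ℝ (fun v => fT 0 v 2) u (Pi.single 0 1) = 0
    rw [show (fun v : Fin 2 → ℝ => fT 0 v 2) = fun v => v 1 * 2⁻¹ from
      funext fun v => by rw [fT0 v]; simp [Matrix.vecHead, Matrix.vecTail]; ring]
    erw [(h1.mul_const (2:ℝ)⁻¹).fderiv]; simp

lemma fTT11 (u : Fin 2 → ℝ) : fTT 1 1 u = fun _ => 0 := by
  have h0 := hasFDerivAt_apply (𝕜 := ℝ) (0 : Fin 2) u
  funext k
  fin_cases k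
  · show fderiv ℝ (fun v => fT 1 v 0) u (Pi.single 1 1) = 0
    rw [show (fun v : Fin 2 → ℝ => fT 1 v 0) = fun _ => (0:ℝ) from
      funext fun v => by rw [fT1 v]; simp, fderiv_fun_const]; simp
  · show fderiv ℝ (fun v => fT 1 v 1) u (Pi.single 1 1) = 0
    rw [show (fun v : Fin 2 → ℝ => fT 1 v 1) = fun _ => (1:ℝ) from
      funext fun v => by rw [fT1 v]; simp, fderiv_fun_const]; simp
  · show fderiv ℝ (fun v => fT 1 v 2) u (Pi.single 1 1) = 0
    rw [show (fun v : Fin 2 → ℝ => fT 1 v 2) = fun v => v 0 * 2⁻¹ from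
      funext fun v => by rw [fT1 v]; simp [Matrix.vecHead, Matrix.vecTail]; ring]
    erw [(h0.mul_const (2:ℝ)⁻¹).fderiv]; simp

/-- The hyperbolic paraboloid `x3 = x1 x2/2` is a minimal surface in Nil₃:
its mean curvature vanishes identically, for any choice of unit normal. -/
theorem paraboloid_minimal (u : Fin 2 → ℝ) (N : Fin 3 → ℝ)
    (hN1 : ip (f u) N N = 1)
    (hN2 : ip (f u) N (fT 0 u) = 0)
    (hN3 : ip (f u) N (fT 1 u) = 0) :
    meanCurv u N = 0 := by
  have hF : I₁ 0 1 u = 0 := by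
    simp [I₁, ip, fT0, fT1, gNil, f, Fin.sum_univ_three]; ring
  have h00 : II 0 0 u N = 0 := by
    have hv : (fun k => fTT 0 0 u k +
        ∑ i : Fin 3, ∑ j : Fin 3, Γ k i j (f u) * fT 0 u i * fT 0 u j)
        = fun k => -(u 1) * fT 1 u k := by
      funext k
      fin_cases k <;>
        simp [fTT00, Γ_val, fT0, fT1, f, Fin.sum_univ_three, Matrix.vecHead, Matrix.vecTail] <;> ring
    rw [II, hv]
    have : ip (f u) N (fun k => -(u 1) * fT 1 u k) = -(u 1) * ip (f u) N (fT 1 u) := by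
      simp [ip, Fin.sum_univ_three]; ring
    rw [this, hN3, mul_zero]
  have h11 : II 1 1 u N = 0 := by
    have hv : (fun k => fTT 1 1 u k +
        ∑ i : Fin 3, ∑ j : Fin 3, Γ k i j (f u) * fT 1 u i * fT 1 u j)
        = fun _ => (0:ℝ) := by
      funext k
      fin_cases k <;>
        simp [fTT11, Γ_val, fT0, fT1, f, Fin.sum_univ_three, Matrix.vecHead, Matrix.vecTail] <;> ring
    rw [II, hv]
    simp [ip, Fin.sum_univ_three]
  rw [meanCurv, hF, h00, h11]
  simp
end
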